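/- The function ŷ satisfies, for every x ∈ ℝ, −ŷ″(x) − (2πN)²·ŷ(x) = sin(2πNx); moreover a_0·ŷ(0) + b_0·ŷ(1) = 0 and ŷ′(0) = ŷ′(1). (Thus ŷ is an adjoined function in the Jordan chain of the operator −d²/dx² with boundary conditions a_0y(0)+b_0y(1)=0, y′(0)−y′(1)=0 at the eigenvalue (2πN)², whose eigenfunction is sin(2πNx).) -/

import Mathlib

open Complex

/-- The adjoined function `ŷ` in the Jordan chain at the eigenvalue `(2πN)²`. -/
noncomputable def yhat (N : ℕ) (a0 b0 : ℂ) (x : ℝ) : ℂ :=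
  (x : ℂ) * cos (2 * (Real.pi : ℂ) * N * x) / (4 * (Real.pi : ℂ) * N)
  + sin (2 * (Real.pi : ℂ) * N * x) / (16 * (Real.pi : ℂ) ^ 2 * N ^ 2)
  - b0 * cos (2 * (Real.pi : ℂ) * N * x) / (4 * (Real.pi : ℂ) * N * (a0 + b0))

/-- The adjoined function `ẑ` (conjugated) in the Jordan chain of the adjoint
operator at the eigenvalue `(2πN)²`. -/
noncomputable def zhat (N : ℕ) (a0 b0 : ℂ) (x : ℝ) : ℂ :=
  -((x : ℂ) * sin (2 * (Real.pi : ℂ) * N * x) / (4 * (Real.pi : ℂ) * N))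
  - cos (2 * (Real.pi : ℂ) * N * x) / (16 * (Real.pi : ℂ) ^ 2 * N ^ 2)
  + a0 * sin (2 * (Real.pi : ℂ) * N * x) / (4 * (Real.pi : ℂ) * N * (a0 + b0))

/-- Derivative of `x ↦ cos (c x)` as a function on `ℝ`. -/
private lemma hasDerivAt_ccos (c : ℂ) (x : ℝ) :
    HasDerivAt (fun t : ℝ => Complex.cos (c * t)) (-Complex.sin (c * x) * c) x := by
  have h : HasDerivAt (fun w : ℂ => Complex.cos (c * w)) (-Complex.sin (c * x) * c) (x : ℂ) := by
    simpa [Function.comp_def] using (Complex.hasDerivAt_cos (c * x)).comp (x : ℂ)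
      ((hasDerivAt_id (x : ℂ)).const_mul c)
  exact h.comp_ofReal

private lemma hasDerivAt_csin (c : ℂ) (x : ℝ) :
    HasDerivAt (fun t : ℝ => Complex.sin (c * t)) (Complex.cos (c * x) * c) x := by
  have h : HasDerivAt (fun w : ℂ => Complex.sin (c * w)) (Complex.cos (c * x) * c) (x : ℂ) := by
    simpa [Function.comp_def] using (Complex.hasDerivAt_sin (c * x)).comp (x : ℂ)
      ((hasDerivAt_id (x : ℂ)).const_mul c)
  exact h.comp_ofReal

private lemma hasDerivAt_ofReal' (x : ℝ) : HasDerivAt (fun t : ℝ => (t : ℂ)) 1 x := by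
  simpa using (hasDerivAt_id x).ofReal_comp

/-- First derivative of `yhat`. -/
noncomputable def yD (N : ℕ) (a0 b0 : ℂ) (x : ℝ) : ℂ :=
  ((1 : ℂ) * cos (2 * (Real.pi : ℂ) * N * x)
      + (x : ℂ) * (-sin (2 * (Real.pi : ℂ) * N * x) * (2 * (Real.pi : ℂ) * N)))
      / (4 * (Real.pi : ℂ) * N)
  + cos (2 * (Real.pi : ℂ) * N * x) * (2 * (Real.pi : ℂ) * N) / (16 * (Real.pi : ℂ) ^ 2 * N ^ 2)
  - b0 * (-sin (2 * (Real.pi : ℂ) * N * x) * (2 * (Real.pi : ℂ) * N))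
      / (4 * (Real.pi : ℂ) * N * (a0 + b0))

/-- Second derivative of `yhat`. -/
noncomputable def yD2 (N : ℕ) (a0 b0 : ℂ) (x : ℝ) : ℂ :=
  ((1 : ℂ) * (-sin (2 * (Real.pi : ℂ) * N * x) * (2 * (Real.pi : ℂ) * N))
      + ((1 : ℂ) * (-sin (2 * (Real.pi : ℂ) * N * x) * (2 * (Real.pi : ℂ) * N))
        + (x : ℂ) * (-(cos (2 * (Real.pi : ℂ) * N * x) * (2 * (Real.pi : ℂ) * N))
            * (2 * (Real.pi : ℂ) * N))))
      / (4 * (Real.pi : ℂ) * N)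
  + (-sin (2 * (Real.pi : ℂ) * N * x) * (2 * (Real.pi : ℂ) * N)) * (2 * (Real.pi : ℂ) * N)
      / (16 * (Real.pi : ℂ) ^ 2 * N ^ 2)
  - b0 * (-(cos (2 * (Real.pi : ℂ) * N * x) * (2 * (Real.pi : ℂ) * N)) * (2 * (Real.pi : ℂ) * N))
      / (4 * (Real.pi : ℂ) * N * (a0 + b0))

private lemma hasDerivAt_yhat (N : ℕ) (a0 b0 : ℂ) (x : ℝ) :
    HasDerivAt (yhat N a0 b0) (yD N a0 b0 x) x := by
  unfold yhat yD
  set c : ℂ := 2 * (Real.pi : ℂ) * N with hc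
  exact ((((hasDerivAt_ofReal' x).mul (hasDerivAt_ccos c x)).div_const _).add
      ((hasDerivAt_csin c x).div_const _)).sub
    (((hasDerivAt_ccos c x).const_mul b0).div_const _)

private lemma hasDerivAt_yD (N : ℕ) (a0 b0 : ℂ) (x : ℝ) :
    HasDerivAt (yD N a0 b0) (yD2 N a0 b0 x) x := by
  unfold yD yD2
  set c : ℂ := 2 * (Real.pi : ℂ) * N with hc
  have h1 : HasDerivAt (fun t : ℝ => (1 : ℂ) * Complex.cos (c * t))
      ((1 : ℂ) * (-Complex.sin (c * x) * c)) x := (hasDerivAt_ccos c x).const_mul 1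
  have h2 : HasDerivAt (fun t : ℝ => -Complex.sin (c * t) * c)
      (-(Complex.cos (c * x) * c) * c) x := ((hasDerivAt_csin c x).neg).mul_const c
  have h3 : HasDerivAt (fun t : ℝ => (t : ℂ) * (-Complex.sin (c * t) * c))
      ((1 : ℂ) * (-Complex.sin (c * x) * c) + (x : ℂ) * (-(Complex.cos (c * x) * c) * c)) x :=
    (hasDerivAt_ofReal' x).mul h2
  exact (((h1.add h3).div_const _).add
      (((hasDerivAt_ccos c x).mul_const c).div_const _)).sub
    ((h2.const_mul b0).div_const _)

private lemma deriv_yhat (N : ℕ) (a0 b0 : ℂ) :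
    deriv (yhat N a0 b0) = yD N a0 b0 :=
  funext fun x => (hasDerivAt_yhat N a0 b0 x).deriv

private lemma cos_two_pi_N (N : ℕ) : Complex.cos (2 * (Real.pi : ℂ) * N * (1 : ℝ)) = 1 := by
  have : (2 * (Real.pi : ℂ) * N * (1 : ℝ)) = ((N * (2 * Real.pi) : ℝ) : ℂ) := by
    push_cast; ring
  rw [this, ← Complex.ofReal_cos, Real.cos_nat_mul_two_pi]
  norm_num

private lemma sin_two_pi_N (N : ℕ) : Complex.sin (2 * (Real.pi : ℂ) * N * (1 : ℝ)) = 0 := by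
  have : (2 * (Real.pi : ℂ) * N * (1 : ℝ)) = (((2 * N : ℕ) * Real.pi : ℝ) : ℂ) := by
    push_cast; ring
  rw [this, ← Complex.ofReal_sin, Real.sin_nat_mul_pi]
  norm_num

/-- `ŷ` is an adjoined function: `−ŷ″ − (2πN)²ŷ = sin(2πNx)` and `ŷ` satisfies
the boundary conditions `a₀ŷ(0) + b₀ŷ(1) = 0`, `ŷ′(0) = ŷ′(1)`. -/
theorem yhat_adjoined (N : ℕ) (hN : 1 ≤ N) (a0 b0 : ℂ) (hab : a0 + b0 ≠ 0) :
    (∀ x : ℝ,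
      -(deriv (deriv (yhat N a0 b0)) x) - (2 * (Real.pi : ℂ) * N) ^ 2 * yhat N a0 b0 x
        = sin (2 * (Real.pi : ℂ) * N * x)) ∧
    a0 * yhat N a0 b0 0 + b0 * yhat N a0 b0 1 = 0 ∧
    deriv (yhat N a0 b0) 0 = deriv (yhat N a0 b0) 1 := by
  have hπ : ((Real.pi : ℂ)) ≠ 0 := by
    exact_mod_cast Complex.ofReal_ne_zero.mpr Real.pi_ne_zero
  have hNC : ((N : ℂ)) ≠ 0 := by
    exact_mod_cast Nat.cast_ne_zero.mpr (Nat.one_le_iff_ne_zero.mp hN)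
  refine ⟨?_, ?_, ?_⟩
  · intro x
    rw [deriv_yhat]
    rw [(hasDerivAt_yD N a0 b0 x).deriv]
    unfold yD2 yhat
    field_simp
    ring_nf
  · unfold yhat
    rw [cos_two_pi_N, sin_two_pi_N]
    have h16 : a0 * (Real.pi : ℂ) ^ 2 * (N : ℂ) ^ 2 * 16 + b0 * (Real.pi : ℂ) ^ 2 * (N : ℂ) ^ 2 * 16 ≠ 0 := by
      have he : a0 * (Real.pi : ℂ) ^ 2 * (N : ℂ) ^ 2 * 16 + b0 * (Real.pi : ℂ) ^ 2 * (N : ℂ) ^ 2 * 16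
          = (a0 + b0) * ((Real.pi : ℂ) ^ 2 * (N : ℂ) ^ 2 * 16) := by ring
      rw [he]
      exact mul_ne_zero hab (by
        exact mul_ne_zero (mul_ne_zero (pow_ne_zero 2 hπ) (pow_ne_zero 2 hNC)) (by norm_num))
    norm_num [Complex.cos_zero, Complex.sin_zero]
    field_simp [h16]
    field_simp [show b0 * (Real.pi : ℂ) ^ 2 * (N : ℂ) ^ 2 * 16 + a0 * (Real.pi : ℂ) ^ 2 * (N : ℂ) ^ 2 * 16 ≠ 0 by rwa [add_comm]]
    ring
  · rw [deriv_yhat]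
    unfold yD
    rw [cos_two_pi_N, sin_two_pi_N]
    norm_num [Complex.cos_zero, Complex.sin_zero]
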